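/- arXiv:2512.22444 — 6 statements merged into one kernel-verified Lean document; each statement's English description precedes it below -/
import Mathlib

section
/- Let (M,φ,ξ,η,g) be a 3-dimensional almost contact metric manifold with complex frame {ξ,∂,∂̄} satisfying φ(∂) = i∂, and spin coefficients κ, σ as above. The structure is normal, i.e. ∇_{φ(X)} ξ = φ(∇_X ξ) for all vector fields X, if and only if κ = 0 and σ = 0. -/
open Complex

/-- A three-dimensional almost contact metric structure, described in a
complex frame `{ξ, ∂, ∂̄}` with `φ(∂) = i∂`, and with spin coefficients defined by
`∇_ξξ = -κ̄∂ - κ∂̄`, `∇_∂ξ = ρ̄∂ - σ∂̄` (and conjugate), is normal, i.e.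
`∇_{φ(X)}ξ = φ(∇_X ξ)` for all vector fields `X`, if and only if `κ = 0` and `σ = 0`,
i.e. iff the Reeb vector field generates a shear-free geodesic congruence. -/
theorem normal_iff_shearfree_geodesic {M TM : Type*}
    [AddCommGroup TM] [Module (M → ℂ) TM]
    (conn : TM → TM → TM) (φ : TM → TM)
    (ξ p pb : TM) (κ σ ρ : M → ℂ)
    (hindep : ∀ a b c : M → ℂ, a • ξ + b • p + c • pb = 0 → a = 0 ∧ b = 0 ∧ c = 0)
    (hφadd : ∀ X Y, φ (X + Y) = φ X + φ Y)
    (hφsmul : ∀ (a : M → ℂ) (X : TM), φ (a • X) = a • φ X)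
    (hφξ : φ ξ = 0)
    (hφp : φ p = ((fun _ => Complex.I : M → ℂ)) • p)
    (hφpb : φ pb = ((fun _ => -Complex.I : M → ℂ)) • pb)
    (hconnadd : ∀ X Y, conn (X + Y) ξ = conn X ξ + conn Y ξ)
    (hconnsmul : ∀ (a : M → ℂ) (X : TM), conn (a • X) ξ = a • conn X ξ)
    (hframe : ∀ X : TM, ∃ a b c : M → ℂ, X = a • ξ + b • p + c • pb)
    (hcξ : conn ξ ξ = (fun x => -(star (κ x))) • p + (fun x => -(κ x)) • pb)
    (hcp : conn p ξ = (fun x => star (ρ x)) • p + (fun x => -(σ x)) • pb)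
    (hcpb : conn pb ξ = (fun x => ρ x) • pb + (fun x => -(star (σ x))) • p) :
    (∀ X, conn (φ X) ξ = φ (conn X ξ)) ↔ (κ = 0 ∧ σ = 0) := by
  have hconn0 : conn (0 : TM) ξ = 0 := by
    have := hconnsmul 0 ξ
    simpa using this
  constructor
  · intro h
    have hκ : κ = 0 := by
      have h1 := h ξ
      rw [hφξ, hconn0, hcξ, hφadd, hφsmul, hφsmul, hφp, hφpb, smul_smul, smul_smul] at h1
      have h2 : (0 : M → ℂ) • ξ + ((fun x => -(star (κ x))) * fun _ => Complex.I) • p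
          + ((fun x => -(κ x)) * fun _ => -Complex.I) • pb = 0 := by
        rw [zero_smul, zero_add]
        exact h1.symm
      have h3 := (hindep _ _ _ h2).2.2
      funext x
      have := congrFun h3 x
      simp only [Pi.mul_apply, Pi.zero_apply] at this
      have : κ x * Complex.I = 0 := by
        have h4 : -(κ x) * -Complex.I = 0 := this
        linear_combination h4
      exact (mul_eq_zero.mp this).resolve_right Complex.I_ne_zero
    have hσ : σ = 0 := by
      have h1 := h p
      rw [hφp, hconnsmul, hcp, hφadd, hφsmul, hφsmul, hφp, hφpb, smul_add, smul_smul,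
        smul_smul, smul_smul, smul_smul] at h1
      have h2 : (0 : M → ℂ) • ξ
          + (((fun _ => Complex.I : M → ℂ) * fun x => star (ρ x)) - ((fun x => star (ρ x)) * fun _ => Complex.I)) • p
          + (((fun _ => Complex.I : M → ℂ) * fun x => -(σ x)) - ((fun x => -(σ x)) * fun _ => -Complex.I)) • pb = 0 := by
        rw [zero_smul, zero_add, sub_smul, sub_smul, sub_add_sub_comm, h1, sub_self]
      have h3 := (hindep _ _ _ h2).2.2
      funext x
      have := congrFun h3 x
      simp only [Pi.sub_apply, Pi.mul_apply, Pi.zero_apply] at this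
      have hz : -(2 * Complex.I) * σ x = 0 := by linear_combination this
      have := mul_eq_zero.mp hz
      rcases this with h | h
      · exfalso; apply Complex.I_ne_zero; linear_combination (-1/2 : ℂ) * h
      · exact h
    exact ⟨hκ, hσ⟩
  · rintro ⟨hκ, hσ⟩ X
    have h0 : (fun _ => (0:ℂ)) = (0 : M → ℂ) := rfl
    have hcξ' : conn ξ ξ = 0 := by
      rw [hcξ, hκ]
      simp only [Pi.zero_apply, star_zero, neg_zero]
      rw [h0, zero_smul, zero_smul, add_zero]
    have hcp' : conn p ξ = (fun x => star (ρ x)) • p := by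
      rw [hcp, hσ]
      simp only [Pi.zero_apply, neg_zero]
      rw [h0, zero_smul, add_zero]
    have hcpb' : conn pb ξ = (fun x => ρ x) • pb := by
      rw [hcpb, hσ]
      simp only [Pi.zero_apply, star_zero, neg_zero]
      rw [h0, zero_smul, add_zero]
    obtain ⟨a, b, c, rfl⟩ := hframe X
    simp only [hφadd, hφsmul, hφξ, hφp, hφpb, hconnadd, hconnsmul, hcξ', hcp', hcpb',
      smul_zero, smul_smul, zero_add, add_zero, hconn0]
    module
end

section
/- A 3-dimensional contact metric structure (κ = 0, ω = 1, hence Θ = 0) is a (k,μ,ν)-structure — meaning Ric(ξ,ξ) = 2k, Ric(∂,ξ) = 0, Ric(∂,∂) = (iμ − ν)σ — if and only if k = 1 − |σ|², P(σ) := ξ(σ) − 2εσ = σ(iμ − ν), and ð̄(σ) := ∂̄(σ) + 2σβ̄ = 0. -/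
open Complex

/-- A 3-dimensional contact metric structure (`κ = 0`, `ρ = i`) is a
`(k,μ,ν)`-structure — i.e. `Ric(ξ,ξ) = 2k`, `Ric(∂,ξ) = 0`, `Ric(∂,∂) = (iμ - ν)σ` —
if and only if `k = 1 - |σ|²`, `P(σ) = ξ(σ) - 2εσ = σ(iμ - ν)`, and
`ð̄(σ) = ∂̄(σ) + 2σβ̄ = 0`, given the generalized Sachs equations. -/
theorem k_mu_nu_iff_spin_coefficients {M : Type*}
    (ξD pD pbD : (M → ℂ) →ₗ[ℂ] (M → ℂ))
    (hξconst : ∀ c : ℂ, ξD (fun _ => c) = 0)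
    (hpconst : ∀ c : ℂ, pD (fun _ => c) = 0)
    (hpbconst : ∀ c : ℂ, pbD (fun _ => c) = 0)
    (κ σ β ε ρ : M → ℂ) (k μ₀ ν₀ : M → ℝ)
    (Ricξξ Ricpp Ricξp : M → ℂ)
    (hκ : κ = 0) (hρ : ρ = fun _ => Complex.I)
    (hSachs1 : (fun x => -(ξD ρ x) - pbD κ x) =
      fun x => ((‖κ x‖ : ℂ))^2 + ((‖σ x‖ : ℂ))^2 + (ρ x)^2
        + κ x * star (β x) + Ricξξ x / 2)
    (hSachs2 : (fun x => ξD σ x - pD κ x) =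
      fun x => (κ x)^2 + 2 * σ x * ε x - σ x * (ρ x + star (ρ x))
        - κ x * β x + Ricpp x)
    (hSachs3 : (fun x => -(pD ρ x) - pbD σ x) =
      fun x => 2 * σ x * star (β x) + (ρ x - star (ρ x)) * κ x + Ricξp x) :
    ((Ricξξ = fun x => 2 * (k x : ℂ)) ∧ Ricξp = 0 ∧
        (Ricpp = fun x => (Complex.I * (μ₀ x : ℂ) - (ν₀ x : ℂ)) * σ x)) ↔
      ((k = fun x => 1 - (‖σ x‖)^2) ∧
        ((fun x => ξD σ x - 2 * ε x * σ x) =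
          fun x => σ x * (Complex.I * (μ₀ x : ℂ) - (ν₀ x : ℂ))) ∧
        ((fun x => pbD σ x + 2 * σ x * star (β x)) = 0)) := by
  subst hκ hρ
  have h1 : ∀ x, Ricξξ x = 2 - 2 * ((‖σ x‖ : ℂ))^2 := by
    intro x
    have h := congrFun hSachs1 x
    simp [hξconst, hpbconst] at h
    linear_combination -2 * h
  have h2 : ∀ x, ξD σ x - 2 * ε x * σ x = Ricpp x := by
    intro x
    have h := congrFun hSachs2 x
    simp [hpconst, Complex.ext_iff] at h ⊢
    constructor <;> linarith [h.1, h.2]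
  have h3 : ∀ x, pbD σ x + 2 * σ x * star (β x) = -Ricξp x := by
    intro x
    have h := congrFun hSachs3 x
    simp [hpconst] at h
    simp only [Complex.star_def]
    linear_combination -h
  constructor
  · rintro ⟨hA, hB, hC⟩
    refine ⟨?_, ?_, ?_⟩
    · funext x
      have h2k : (2:ℂ) * (k x : ℂ) = 2 - 2 * ((‖σ x‖ : ℂ))^2 :=
        (congrFun hA x).symm.trans (h1 x)
      have : ((k x : ℂ)) = ((1 - (‖σ x‖)^2 : ℝ) : ℂ) := by
        push_cast
        linear_combination h2k / 2
      exact_mod_cast this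
    · funext x
      rw [h2 x, congrFun hC x]
      ring
    · funext x
      simp only [Pi.zero_apply]
      rw [h3 x, hB]
      simp
  · rintro ⟨hA, hB, hC⟩
    refine ⟨?_, ?_, ?_⟩
    · funext x
      rw [h1 x, hA]
      push_cast
      ring
    · funext x
      have hc := congrFun hC x
      simp only [Pi.zero_apply] at hc
      have := (h3 x).symm.trans hc
      simp only [Pi.zero_apply]
      linear_combination -this
    · funext x
      rw [← h2 x, congrFun hB x]
      ring
end

section
/- On a 3-dimensional η-Einstein contact metric manifold (κ = 0, ρ = i, P(σ) = 0, ð̄(σ) = 0) with σ nowhere zero, the identity [ξ,∂̄]σ = −(ε+i)∂̄σ + σ̄∂σ together with the Sachs equation ξ(β̄) + ∂̄(ε) = −β̄(i+ε) − βσ̄ implies ð(σ) := ∂σ − 2βσ = 0, i.e. 2|σ|²β = σ̄ ∂σ. -/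
open Complex

/-- On a 3-dimensional η-Einstein contact metric manifold (`κ = 0`,
`ρ = i`, `P(σ) = 0`, `ð̄(σ) = 0`) with `σ` nowhere zero, the commutator identity
`[ξ,∂̄]σ = -(ε+i)∂̄σ + σ̄∂σ` together with the Sachs equation
`ξ(β̄) + ∂̄(ε) = -β̄(i+ε) - βσ̄` implies `2|σ|²β = σ̄∂σ`, hence `ð(σ) = ∂σ - 2βσ = 0`. -/
theorem eta_einstein_contact_eth_sigma_zero {M : Type*}
    (ξD pD pbD : (M → ℂ) →ₗ[ℂ] (M → ℂ))
    (hξLeib : ∀ f g : M → ℂ, ξD (f * g) = ξD f * g + f * ξD g)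
    (hpLeib : ∀ f g : M → ℂ, pD (f * g) = pD f * g + f * pD g)
    (hpbLeib : ∀ f g : M → ℂ, pbD (f * g) = pbD f * g + f * pbD g)
    (σ β ε : M → ℂ)
    (hεim : ∀ x, (ε x).re = 0)
    (hσne : ∀ x, σ x ≠ 0)
    (hbracket : ∀ f : M → ℂ, (fun x => ξD (pbD f) x - pbD (ξD f) x) =
      fun x => -(ε x + Complex.I) * pbD f x + star (σ x) * pD f x)
    (hP_sigma : ξD σ = fun x => 2 * ε x * σ x)
    (hethbar_sigma : pbD σ = fun x => -2 * σ x * star (β x))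
    (hSachs : (fun x => ξD (fun y => star (β y)) x + pbD ε x) =
      fun x => -(star (β x)) * (Complex.I + ε x) - β x * star (σ x)) :
    (∀ x, 2 * ((‖σ x‖ : ℂ))^2 * β x = star (σ x) * pD σ x) ∧
      (fun x => pD σ x - 2 * β x * σ x) = 0 := by
  have key : ∀ x, pD σ x = 2 * β x * σ x := by
    intro x
    have hb := congrFun (hbracket σ) x
    have hS := congrFun hSachs x
    have h1 : pbD σ = (-2 : ℂ) • (σ * fun y => star (β y)) := by
      funext y; rw [hethbar_sigma]; simp [Pi.smul_apply]; try ring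
    have h2 : ξD σ = (2 : ℂ) • (ε * σ) := by
      funext y; rw [hP_sigma]; simp [Pi.smul_apply]; try ring
    have e1 : ξD (pbD σ) x =
        -2 * (ξD σ x * star (β x) + σ x * ξD (fun y => star (β y)) x) := by
      rw [h1, map_smul, hξLeib]; simp [Pi.smul_apply]; try ring
    have e2 : pbD (ξD σ) x = 2 * (pbD ε x * σ x + ε x * pbD σ x) := by
      rw [h2, map_smul, hpbLeib]; simp [Pi.smul_apply]; try ring
    have hξσ := congrFun hP_sigma x
    have hpbσ := congrFun hethbar_sigma x
    have hstarσ : star (σ x) ≠ 0 := star_ne_zero.mpr (hσne x)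
    have main : 2 * σ x * β x * star (σ x) = star (σ x) * pD σ x := by
      rw [e1, e2, hξσ, hpbσ] at hb
      have hS' : ξD (fun y => star (β y)) x =
          -(star (β x)) * (Complex.I + ε x) - β x * star (σ x) - pbD ε x := by
        linear_combination hS
      rw [hS'] at hb
      linear_combination hb
    refine mul_left_cancel₀ hstarσ ?_
    linear_combination -main
  constructor
  · intro x
    have habs : ((‖σ x‖ : ℂ))^2 = σ x * star (σ x) := by
      rw [show ((‖σ x‖ : ℂ))^2 = ((‖σ x‖^2 : ℝ) : ℂ) by push_cast; ring,
        Complex.sq_norm, ← Complex.mul_conj]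
      rfl
    rw [habs, key x]; ring
  · funext x
    simp only [Pi.zero_apply, key x]; ring
end

section
/- Let {ξ, e₂, e₃} be an orthonormal frame on a 3-dimensional Riemannian manifold with [e₂, e₃] = 2ωξ + (div e₃)e₂ − (div e₂)e₃ and suppose ξ(ω) = −2Θω. Then for any smooth function ω, div(φ∇ʰω) = −2ω ξ(ω) = 4Θω², where φ∇ʰω = −e₃(ω)e₂ + e₂(ω)e₃ and div denotes the Riemannian divergence. -/
/-- With `[e₂,e₃] = 2ωξ + (div e₃)e₂ - (div e₂)e₃` and the
Raychaudhuri-type relation `ξ(ω) = -2Θω`, the divergence of `φ∇ʰω = -e₃(ω)e₂ + e₂(ω)e₃`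
satisfies `div(φ∇ʰω) = -2ω ξ(ω) = 4Θω²`. -/
theorem div_phi_grad_omega {M TM : Type*}
    [AddCommGroup TM] [Module (M → ℝ) TM]
    (act : TM → (M → ℝ) → (M → ℝ))
    (div : TM → (M → ℝ))
    (bracket : TM → TM → TM)
    (ξ e₂ e₃ : TM) (Θ ω : M → ℝ)
    (hdiv : ∀ (f : M → ℝ) (X : TM), div (f • X) = act X f + f * div X)
    (hdivsub : ∀ X Y, div (X - Y) = div X - div Y)
    (hactadd : ∀ X Y f, act (X + Y) f = act X f + act Y f)
    (hactsub : ∀ X Y f, act (X - Y) f = act X f - act Y f)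
    (hactsmul : ∀ (a : M → ℝ) (X : TM) f, act (a • X) f = a * act X f)
    (hbr : bracket e₂ e₃ = (2 * ω) • ξ + (div e₃) • e₂ - (div e₂) • e₃)
    (hbract : ∀ f, (fun x => act e₂ (act e₃ f) x - act e₃ (act e₂ f) x) =
      act (bracket e₂ e₃) f)
    (hray : act ξ ω = -(2 * Θ * ω)) :
    div ((act e₂ ω) • e₃ - (act e₃ ω) • e₂) = -(2 * ω) * act ξ ω ∧
      div ((act e₂ ω) • e₃ - (act e₃ ω) • e₂) = 4 * Θ * ω ^ 2 := by
  have hb := hbract ω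
  rw [hbr, hactsub, hactadd, hactsmul, hactsmul, hactsmul] at hb
  have key : div ((act e₂ ω) • e₃ - (act e₃ ω) • e₂) = -(2 * ω) * act ξ ω := by
    rw [hdivsub, hdiv, hdiv]
    funext x
    have hbx := congrFun hb x
    simp only [Pi.add_apply, Pi.sub_apply, Pi.mul_apply, Pi.neg_apply] at hbx ⊢
    nlinarith [hbx]
  refine ⟨key, ?_⟩
  rw [key, hray]
  funext x
  simp only [Pi.mul_apply, Pi.neg_apply, Pi.ofNat_apply, Pi.pow_apply]
  ring
end

section
/- Let (M,φ,ξ,η,g) be a compact 3-dimensional normal ACM (trans-Sasakian) manifold of rank 3 that is η-Einstein. If the estimates ∫(½‖∇ʰΘ‖² + 4ω²Θ²)dv ≤ ∫|ð̄σ|²dv and ∫(½‖∇ʰω‖² + 4ω²Θ²)dv ≤ ∫|ð̄σ|²dv hold with σ = 0 (normality), and if ω is nowhere zero (rank 3), then Θ ≡ 0 and ω is constant; hence the structure is α-Sasakian with constant α = ω. -/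
open MeasureTheory Complex

lemma zero_of_nonneg_int {M : Type*} [TopologicalSpace M] [MeasureSpace M]
    [(volume : Measure M).IsOpenPosMeasure]
    (f : M → ℝ) (hc : Continuous f) (hnn : ∀ x, 0 ≤ f x)
    (hint : Integrable f) (hle : ∫ x, f x ≤ 0) : ∀ x, f x = 0 := by
  have h0 : ∫ x, f x = 0 := le_antisymm hle (integral_nonneg hnn)
  have := (integral_eq_zero_iff_of_nonneg hnn hint).mp h0
  have := hc.ae_eq_iff_eq volume continuous_const |>.mp this
  intro x; exact congrFun this x

/-- A compact 3-dimensional normal ACM (trans-Sasakian) manifold of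
rank 3 (`ω` nowhere zero) that is η-Einstein: given the a priori estimates
`∫(½‖∇ʰΘ‖² + 4ω²Θ²) ≤ ∫|ð̄σ|²` and `∫(½‖∇ʰω‖² + 4ω²Θ²) ≤ ∫|ð̄σ|²` with `σ = 0`
(normality), one concludes `Θ ≡ 0` and `ω` constant; hence the structure is
α-Sasakian with constant `α = ω` (i.e. `ρ = iω` with `ω` constant). -/
theorem compact_rank3_eta_einstein_alpha_sasakian {M : Type*}
    [TopologicalSpace M] [MeasureSpace M]
    [CompactSpace M]
    [(volume : Measure M).IsOpenPosMeasure]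
    (ξD pD pbD : (M → ℂ) →ₗ[ℂ] (M → ℂ))
    (σ β : M → ℂ) (Θ ω : M → ℝ) (ρ : M → ℂ)
    (hρ : ρ = fun x => (Θ x : ℂ) + Complex.I * (ω x : ℂ))
    (hnormal : σ = 0)
    (hrank3 : ∀ x, ω x ≠ 0)
    (ethσ : M → ℂ) (hethσ : ethσ = fun x => pbD σ x + 2 * σ x * star (β x))
    (nΘ nω : M → ℝ)
    (hnΘ : nΘ = fun x => 2 * (‖pD (fun y => ((Θ y : ℂ))) x‖)^2)
    (hnω : nω = fun x => 2 * (‖pD (fun y => ((ω y : ℂ))) x‖)^2)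
    (hΘcont : Continuous Θ) (hωcont : Continuous ω)
    (hnΘcont : Continuous nΘ) (hnωcont : Continuous nω)
    (hint1 : Integrable (fun x => nΘ x / 2 + 4 * (ω x)^2 * (Θ x)^2))
    (hint2 : Integrable (fun x => nω x / 2 + 4 * (ω x)^2 * (Θ x)^2))
    (hest1 : ∫ x, (nΘ x / 2 + 4 * (ω x)^2 * (Θ x)^2) ≤ ∫ x, (‖ethσ x‖)^2)
    (hest2 : ∫ x, (nω x / 2 + 4 * (ω x)^2 * (Θ x)^2) ≤ ∫ x, (‖ethσ x‖)^2)
    (hbracket : ∀ f : M → ℂ, (fun x => pD (pbD f) x - pbD (pD f) x) =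
      fun x => 2 * Complex.I * (ω x : ℂ) * ξD f x
        + star (β x) * pD f x - β x * pbD f x)
    (hconj : pbD (fun y => ((ω y : ℂ))) = fun x => star (pD (fun y => ((ω y : ℂ))) x))
    (hconst : ∀ f : M → ℂ, ξD f = 0 → pD f = 0 → pbD f = 0 → ∃ c : ℂ, f = fun _ => c) :
    Θ = 0 ∧ ∃ c : ℝ, (ω = fun _ => c) ∧ ρ = fun _ => (c : ℂ) * Complex.I := by
  -- σ = 0 so ð̄σ = 0 and the right-hand sides vanish
  have hethσ0 : ethσ = 0 := by
    subst hnormal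
    rw [hethσ, map_zero]
    funext x
    simp
  have hrhs : (∫ x, (‖ethσ x‖)^2) = 0 := by
    rw [hethσ0]; simp
  rw [hrhs] at hest1 hest2
  -- nonnegativity of integrands
  have hnΘnn : ∀ x, 0 ≤ nΘ x := by
    intro x; rw [hnΘ]; positivity
  have hnωnn : ∀ x, 0 ≤ nω x := by
    intro x; rw [hnω]; positivity
  have hnn1 : ∀ x, 0 ≤ nΘ x / 2 + 4 * (ω x)^2 * (Θ x)^2 := by
    intro x; have := hnΘnn x; positivity
  have hnn2 : ∀ x, 0 ≤ nω x / 2 + 4 * (ω x)^2 * (Θ x)^2 := by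
    intro x; have := hnωnn x; positivity
  have hc1 : Continuous fun x => nΘ x / 2 + 4 * (ω x)^2 * (Θ x)^2 := by
    fun_prop
  have hc2 : Continuous fun x => nω x / 2 + 4 * (ω x)^2 * (Θ x)^2 := by
    fun_prop
  have h1 := zero_of_nonneg_int _ hc1 hnn1 hint1 hest1
  have h2 := zero_of_nonneg_int _ hc2 hnn2 hint2 hest2
  -- each term vanishes pointwise
  have hΘ0 : ∀ x, Θ x = 0 := by
    intro x
    have hx := h1 x
    have hterm : 4 * (ω x)^2 * (Θ x)^2 = 0 := by
      have h2nn : (0:ℝ) ≤ 4 * (ω x)^2 * (Θ x)^2 := by positivity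
      have hd : (0:ℝ) ≤ nΘ x / 2 := by have := hnΘnn x; linarith
      linarith
    have hω2 : (ω x)^2 ≠ 0 := pow_ne_zero _ (hrank3 x)
    have : (Θ x)^2 = 0 := by
      have hω2pos : 0 < (ω x)^2 := (sq_nonneg _).lt_of_ne (Ne.symm hω2)
      nlinarith [sq_nonneg (Θ x)]
    exact pow_eq_zero_iff (n := 2) (by norm_num) |>.mp this
  have hΘeq : Θ = 0 := funext hΘ0
  -- ∇ʰω = 0: pD ω̂ = 0 pointwise, hence as a function
  have hpDω : ∀ x, pD (fun y => ((ω y : ℂ))) x = 0 := by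
    intro x
    have hx := h2 x
    have hterm : nω x = 0 := by
      have h2nn : (0:ℝ) ≤ 4 * (ω x)^2 * (Θ x)^2 := by positivity
      have := hnωnn x
      linarith
    rw [hnω] at hterm
    simp only [mul_eq_zero] at hterm
    rcases hterm with h | h
    · norm_num at h
    · exact norm_eq_zero.mp (pow_eq_zero_iff (n := 2) (by norm_num) |>.mp h)
  have hpDω0 : pD (fun y => ((ω y : ℂ))) = 0 := funext hpDω
  have hpbDω0 : pbD (fun y => ((ω y : ℂ))) = 0 := by
    rw [hconj]; funext x; rw [hpDω x]; simp
  -- bracket relation gives ξD ω̂ = 0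
  have hξω : ∀ x, ξD (fun y => ((ω y : ℂ))) x = 0 := by
    intro x
    have hb := congrFun (hbracket (fun y => ((ω y : ℂ)))) x
    rw [hpDω0, hpbDω0, map_zero, map_zero] at hb
    simp only [Pi.zero_apply, mul_zero, add_zero, sub_zero, sub_self] at hb
    have hb' := hb.symm
    have hIne : (2 : ℂ) * Complex.I * (ω x : ℂ) ≠ 0 := by
      simp [Complex.I_ne_zero, hrank3 x, Complex.ofReal_eq_zero]
    exact (mul_eq_zero.mp hb').resolve_left hIne
  have hξω0 : ξD (fun y => ((ω y : ℂ))) = 0 := funext hξω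
  obtain ⟨c, hc⟩ := hconst _ hξω0 hpDω0 hpbDω0
  -- c is real
  have hωc : ∀ x, (ω x : ℂ) = c := fun x => congrFun hc x
  refine ⟨hΘeq, c.re, ?_, ?_⟩
  · funext x
    have := hωc x
    have : (ω x : ℂ).re = c.re := by rw [this]
    simpa using this
  · rw [hρ]
    funext x
    rw [hΘ0 x]
    have hx := hωc x
    have hcre : (c.re : ℂ) = c := by
      have : c.im = 0 := by
        have := hωc x
        have := congrArg Complex.im this
        simpa using this.symm
      exact Complex.ext (by simp) (by simp [this])
    rw [hx, hcre]
    push_cast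
    ring
end

section
/- Let (M,φ,ξ,η,g) be a compact 3-dimensional normal ACM manifold of rank 1 (dη = 0, equivalently κ = 0 and ω = 0) that is η-Einstein. Then (given the a priori estimate ∫ ½‖∇ʰΘ‖² dv ≤ ∫|ð̄σ|² dv = 0 since σ = 0) the expansion Θ satisfies ∂Θ = 0, i.e. Θ varies only along the Reeb flow, and the structure is β_s-Kenmotsu with β_s = Θ. -/
open MeasureTheory Complex

/-- A compact 3-dimensional normal ACM manifold of rank 1
(`κ = 0`, `ω = 0`, `σ = 0`) that is η-Einstein: the a priori estimate
`∫(½‖∇ʰΘ‖² + 4ω²Θ²) ≤ ∫|ð̄σ|²` (whose right-hand side vanishes since `σ = 0`)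
forces `∇ʰΘ = 0`, i.e. `∂Θ = 0`: the expansion `Θ` varies only along the Reeb flow,
and the structure is `β_s`-Kenmotsu with `β_s = Θ` (i.e. `ρ = Θ`). -/
theorem compact_rank1_eta_einstein_beta_kenmotsu {M : Type*}
    [TopologicalSpace M] [MeasureSpace M]
    [CompactSpace M]
    [(volume : Measure M).IsOpenPosMeasure]
    (pD pbD : (M → ℂ) →ₗ[ℂ] (M → ℂ))
    (σ β : M → ℂ) (Θ ω : M → ℝ) (ρ : M → ℂ)
    (hρ : ρ = fun x => (Θ x : ℂ) + Complex.I * (ω x : ℂ))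
    (hnormal : σ = 0)
    (hrank1 : ω = 0)
    (ethσ : M → ℂ) (hethσ : ethσ = fun x => pbD σ x + 2 * σ x * star (β x))
    (nΘ : M → ℝ)
    (hnΘ : nΘ = fun x => 2 * ‖pD (fun y => ((Θ y : ℂ))) x‖^2)
    (hnΘcont : Continuous nΘ)
    (hint : Integrable (fun x => nΘ x / 2 + 4 * (ω x)^2 * (Θ x)^2))
    (hest : ∫ x, (nΘ x / 2 + 4 * (ω x)^2 * (Θ x)^2) ≤ ∫ x, ‖ethσ x‖^2) :
    pD (fun y => ((Θ y : ℂ))) = 0 ∧ ρ = fun x => ((Θ x : ℂ)) := by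
  subst hnormal hrank1 hρ hnΘ hethσ
  have hpbD0 : pbD 0 = 0 := map_zero pbD
  have hrhs : (∫ x, ‖(fun x => pbD 0 x + 2 * (0:M→ℂ) x * star (β x)) x‖^2) = 0 := by
    simp [hpbD0]
  set f := pD (fun y => ((Θ y : ℂ))) with hf
  have hnonneg : ∀ x, 0 ≤ 2 * ‖f x‖^2 / 2 + 4 * ((0:M→ℝ) x)^2 * (Θ x)^2 := by
    intro x; positivity
  have hint0 : (∫ x, (2 * ‖f x‖^2 / 2 + 4 * ((0:M→ℝ) x)^2 * (Θ x)^2)) = 0 := by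
    refine le_antisymm (hest.trans_eq hrhs) ?_
    exact integral_nonneg hnonneg
  have hae : (fun x => 2 * ‖f x‖^2 / 2 + 4 * ((0:M→ℝ) x)^2 * (Θ x)^2) =ᵐ[volume] 0 := by
    exact (integral_eq_zero_iff_of_nonneg hnonneg hint).mp hint0
  have hcont : Continuous (fun x => 2 * ‖f x‖^2 / 2 + 4 * ((0:M→ℝ) x)^2 * (Θ x)^2) := by
    have : (fun x => 2 * ‖f x‖^2 / 2 + 4 * ((0:M→ℝ) x)^2 * (Θ x)^2)
        = fun x => (fun x => 2 * ‖f x‖^2) x / 2 + 4 * ((0:M→ℝ) x)^2 * (Θ x)^2 := rfl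
    rw [this]; simpa using hnΘcont.div_const 2
  have heq : (fun x => 2 * ‖f x‖^2 / 2 + 4 * ((0:M→ℝ) x)^2 * (Θ x)^2) = 0 :=
    (Continuous.ae_eq_iff_eq volume hcont continuous_const).mp hae
  constructor
  · funext x
    have := congrFun heq x
    simp only [Pi.zero_apply, Pi.ofNat_apply] at this
    have h2 : ‖f x‖ = 0 := by nlinarith [norm_nonneg (f x), sq_nonneg (‖f x‖)]
    simpa using (norm_eq_zero.mp h2)
  · funext x; simp
end
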